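/- For every natural number k ≥ 1, the commutator subgroup of the group defined by the presentation ⟨d, t | dᵏ = 1, t²dtd⁻¹t⁻¹d = 1⟩ is cyclic of order 1 + 4 + 4² + ⋯ + 4^{k−1} = (4ᵏ − 1)/3. -/

import Mathlib

/-- Relators for the presentation `⟨d, t | dᵏ, t²dtd⁻¹t⁻¹d⟩`,
with generators `d = 0`, `t = 1`. -/
def relsDT' (k : ℕ) : Set (FreeGroup (Fin 2)) :=
  let d : FreeGroup (Fin 2) := FreeGroup.of 0
  let t : FreeGroup (Fin 2) := FreeGroup.of 1
  {d ^ k, t ^ 2 * d * t * d⁻¹ * t⁻¹ * d}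

/-
Put `u = d t²`. The second relator says exactly `t u t⁻¹ = u²`, so
`t^(2j) (u t⁻²)^j = u^(4(1 + 4 + ⋯ + 4^(j-1)))` and `dᵏ = 1` becomes `t^(2k) = u^(4m)` with
`m = 1 + 4 + ⋯ + 4^(k-1)`. Comparing this with its conjugates gives `u^(4m) = 1` and `u^(3m) = 1`,
hence `u^m = 1`. As `m` is odd, `⟨u⟩` is normal; the quotient by it is generated by `t`, hence
abelian, and `u = ⁅t, u⁆`, so the commutator subgroup is `⟨u⟩`. Its order is exactly `m` because
`t ↦ (x ↦ 2x)`, `u ↦ (x ↦ x + 1)` is a representation of the group on `ZMod m`.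
-/

open Finset Subgroup
open scoped commutatorElement

theorem three_mul_sum_range_four_pow_add_one (k : ℕ) : 3 * ∑ i ∈ range k, 4 ^ i + 1 = 4 ^ k := by
  have h := geom_sum_mul_add 3 k
  norm_num at h
  rw [← h, mul_comm]

theorem odd_sum_range_four_pow {k : ℕ} (hk : 1 ≤ k) : Odd (∑ i ∈ range k, 4 ^ i) := by
  obtain ⟨j, rfl⟩ := Nat.exists_eq_add_of_le' hk
  exact ⟨2 * ∑ i ∈ range j, 4 ^ i, by rw [geom_sum_succ]; ring⟩

section ConjEqSq

variable {G : Type*} [Group G] {t u : G}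

theorem relator_eq_one_iff_conj_eq_sq {d : G} :
    t ^ 2 * d * t * d⁻¹ * t⁻¹ * d = 1 ↔ t * (d * t ^ 2) * t⁻¹ = (d * t ^ 2) ^ 2 := by
  have : t ^ 2 * d * t * d⁻¹ * t⁻¹ * d = (t ^ 2 * (d * t ^ 2)) *
      ((t * (d * t ^ 2) * t⁻¹)⁻¹ * (d * t ^ 2) ^ 2) * (t ^ 2 * (d * t ^ 2))⁻¹ := by
    simp only [sq]; group
  rw [this, conj_eq_one_iff, inv_mul_eq_one]

theorem semiconjBy_pow_of_conj_eq_sq (hconj : t * u * t⁻¹ = u ^ 2) (n a : ℕ) :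
    SemiconjBy (t ^ n) (u ^ a) (u ^ (2 ^ n * a)) := by
  induction n with
  | zero => simp [SemiconjBy]
  | succ n ih =>
    have ht : SemiconjBy t u (u ^ 2) := by rw [SemiconjBy, ← hconj, inv_mul_cancel_right]
    rw [pow_succ', pow_succ', mul_assoc, pow_mul]
    exact (ht.pow_right _).mul_left ih

theorem pow_mul_mul_inv_sq_pow (hconj : t * u * t⁻¹ = u ^ 2) (j : ℕ) :
    t ^ (2 * j) * (u * (t ^ 2)⁻¹) ^ j = u ^ (4 * ∑ i ∈ range j, 4 ^ i) := by
  induction j with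
  | zero => simp
  | succ j ih =>
    have hsc := semiconjBy_pow_of_conj_eq_sq hconj 2 (4 * ∑ i ∈ range j, 4 ^ i + 1)
    calc t ^ (2 * (j + 1)) * (u * (t ^ 2)⁻¹) ^ (j + 1)
        = t ^ 2 * (t ^ (2 * j) * (u * (t ^ 2)⁻¹) ^ j) * u * (t ^ 2)⁻¹ := by
          rw [mul_add, mul_one, add_comm, pow_add, pow_succ (u * (t ^ 2)⁻¹)]
          simp only [mul_assoc]
      _ = t ^ 2 * u ^ (4 * ∑ i ∈ range j, 4 ^ i + 1) * (t ^ 2)⁻¹ := by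
          rw [ih, pow_succ u, mul_assoc (t ^ 2)]
      _ = u ^ (4 * ∑ i ∈ range (j + 1), 4 ^ i) := by
        rw [hsc.eq, mul_inv_cancel_right, geom_sum_succ]; ring_nf

theorem pow_sum_four_pow_eq_one (hconj : t * u * t⁻¹ = u ^ 2) {k : ℕ}
    (hk : (u * (t ^ 2)⁻¹) ^ k = 1) : u ^ (∑ i ∈ range k, 4 ^ i) = 1 := by
  set m := ∑ i ∈ range k, 4 ^ i
  have htk : t ^ (2 * k) = u ^ (4 * m) := by
    simpa [hk] using pow_mul_mul_inv_sq_pow hconj k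
  -- `u ^ (4 * m)` is a power of `t`, so it commutes with `t`, while conjugation by `t` squares it.
  have h4m : u ^ (4 * m) = 1 := by
    have hsc : t * u ^ (4 * m) = u ^ (2 * (4 * m)) * t := by
      simpa using (semiconjBy_pow_of_conj_eq_sq hconj 1 (4 * m)).eq
    rw [← htk, ← pow_succ', pow_succ, htk, two_mul, pow_add] at hsc
    exact left_eq_mul.mp (mul_right_cancel hsc)
  -- So `t ^ (2 * k) = 1`, while conjugation by it raises `u` to the power `4 ^ k = 3 * m + 1`.
  have h3m : u ^ (3 * m) = 1 := by
    have hsc : t ^ (2 * k) * u = u ^ (4 ^ k) * t ^ (2 * k) := by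
      simpa [pow_mul] using (semiconjBy_pow_of_conj_eq_sq hconj (2 * k) 1).eq
    rw [htk, h4m, one_mul, mul_one, ← three_mul_sum_range_four_pow_add_one, pow_succ'] at hsc
    exact left_eq_mul.mp hsc
  calc u ^ m = u ^ (3 * m) * u ^ m := by rw [h3m, one_mul]
    _ = u ^ (4 * m) := by rw [← pow_add]; ring_nf
    _ = 1 := h4m

theorem zpowers_normal_of_conj_eq_sq (hgen : closure {t, u} = ⊤) (hconj : t * u * t⁻¹ = u ^ 2)
    (hodd : Odd (orderOf u)) : (zpowers u).Normal := by
  have hsq : zpowers (u ^ 2) = zpowers u :=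
    le_antisymm (zpowers_le.mpr (pow_mem (mem_zpowers u) 2))
      (zpowers_le.mpr (mem_zpowers_pow_iff.mpr (Nat.coprime_two_left.mpr hodd)))
  have ht : t ∈ normalizer (zpowers u : Set G) := by
    rw [mem_normalizer_iff_map_conj_eq, MonoidHom.map_zpowers]
    simp [MulAut.conj_apply, hconj, hsq]
  rw [← normalizer_eq_top_iff, eq_top_iff, ← hgen, closure_le]
  rintro x (rfl | rfl)
  · exact ht
  · exact le_normalizer (mem_zpowers x)

theorem commutator_eq_zpowers_of_conj_eq_sq (hgen : closure {t, u} = ⊤)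
    (hconj : t * u * t⁻¹ = u ^ 2) (hodd : Odd (orderOf u)) : commutator G = zpowers u := by
  have := zpowers_normal_of_conj_eq_sq hgen hconj hodd
  apply le_antisymm
  · refine Normal.commutator_le_of_self_sup_commutative_eq_top (H := zpowers t) ?_ inferInstance
    rw [eq_top_iff, ← hgen, closure_le]
    rintro x (rfl | rfl)
    · exact mem_sup_right (mem_zpowers x)
    · exact mem_sup_left (mem_zpowers x)
  · have hu : ⁅t, u⁆ = u := by rw [commutatorElement_def, hconj, sq, mul_inv_cancel_right]
    rw [zpowers_le, _root_.commutator_def, ← hu]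
    exact commutator_mem_commutator (mem_top t) (mem_top u)

end ConjEqSq

theorem orderOf_addRight_one (m : ℕ) : orderOf (Equiv.addRight (1 : ZMod m)) = m := by
  have hpow (n : ℕ) : Equiv.addRight (1 : ZMod m) ^ n = Equiv.addRight (n : ZMod m) := by
    ext x; simp
  apply Nat.dvd_antisymm
  · apply orderOf_dvd_of_pow_eq_one
    rw [hpow, ZMod.natCast_self]; ext; simp
  · rw [← ZMod.natCast_eq_zero_iff]
    simpa [hpow] using congrArg (· 0) (pow_orderOf_eq_one (Equiv.addRight (1 : ZMod m)))

theorem exists_perm_zmod_relsDT' {k : ℕ} (hk : 1 ≤ k) :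
    ∃ d t : Equiv.Perm (ZMod (∑ i ∈ range k, 4 ^ i)),
      d ^ k = 1 ∧ t ^ 2 * d * t * d⁻¹ * t⁻¹ * d = 1 ∧ d * t ^ 2 = Equiv.addRight 1 := by
  set m := ∑ i ∈ range k, 4 ^ i
  set two : (ZMod m)ˣ := ZMod.unitOfCoprime 2 (Nat.coprime_two_left.mpr (odd_sum_range_four_pow hk))
  have htwo : (two : ZMod m) = 2 := ZMod.coe_unitOfCoprime 2 _
  set t := MulAction.toPermHom (ZMod m)ˣ (ZMod m) two
  set u := Equiv.addRight (1 : ZMod m)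
  have hconj : t * u * t⁻¹ = u ^ 2 := by
    ext x
    simpa [t, u, Units.smul_def] using htwo
  have ht : t ^ (2 * k) = 1 := by
    have h4k : (4 : ZMod m) ^ k = 1 := by
      have : ((3 * m + 1 : ℕ) : ZMod m) = 1 := by simp
      rwa [three_mul_sum_range_four_pow_add_one, Nat.cast_pow, Nat.cast_ofNat] at this
    have : two ^ (2 * k) = 1 := Units.ext (by norm_num [htwo, pow_mul, h4k])
    rw [← map_pow, this, map_one]
  have hu : u ^ (4 * m) = 1 := by
    ext x; simp [u]
  refine ⟨u * (t ^ 2)⁻¹, t, ?_, ?_, inv_mul_cancel_right u (t ^ 2)⟩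
  · have := pow_mul_mul_inv_sq_pow hconj k
    rwa [ht, one_mul, hu] at this
  · rw [relator_eq_one_iff_conj_eq_sq, inv_mul_cancel_right]
    exact hconj

section PresentedGroup

open PresentedGroup

theorem closure_of_one_of_zero_mul_sq_eq_top {rels : Set (FreeGroup (Fin 2))} :
    closure {of 1, of 0 * of 1 ^ 2} = (⊤ : Subgroup (PresentedGroup rels)) := by
  have ht : of 1 ∈ closure {of 1, (of 0 * of 1 ^ 2 : PresentedGroup rels)} :=
    subset_closure (Set.mem_insert _ _)
  have hu : of 0 * of 1 ^ 2 ∈ closure {of 1, (of 0 * of 1 ^ 2 : PresentedGroup rels)} :=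
    subset_closure (Set.mem_insert_of_mem _ rfl)
  rw [eq_top_iff, ← closure_range_of, closure_le]
  rintro _ ⟨i, rfl⟩
  match i with
  | 0 => simpa using mul_mem hu (inv_mem (pow_mem ht 2))
  | 1 => exact ht

theorem relsDT'_relations (k : ℕ) :
    (of 0 : PresentedGroup (relsDT' k)) ^ k = 1 ∧
      of 1 ^ 2 * of 0 * of 1 * (of 0)⁻¹ * (of 1)⁻¹ * (of 0 : PresentedGroup (relsDT' k)) = 1 :=
  ⟨one_of_mem (Set.mem_insert _ _), one_of_mem (Set.mem_insert_of_mem _ rfl)⟩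

theorem relsDT'_lift_eq_one {H : Type*} [Group H] {k : ℕ} {d t : H} (hd : d ^ k = 1)
    (hr : t ^ 2 * d * t * d⁻¹ * t⁻¹ * d = 1) : ∀ r ∈ relsDT' k, FreeGroup.lift ![d, t] r = 1 := by
  rintro r (rfl | rfl)
  · simpa using hd
  · simpa using hr

end PresentedGroup

theorem commutator_relsDT'_cyclic (k : ℕ) (hk : 1 ≤ k) :
    IsCyclic ↥(commutator (PresentedGroup (relsDT' k))) ∧
      Nat.card ↥(commutator (PresentedGroup (relsDT' k))) =
        ∑ i ∈ Finset.range k, 4 ^ i := by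
  set t : PresentedGroup (relsDT' k) := PresentedGroup.of 1
  set u : PresentedGroup (relsDT' k) := PresentedGroup.of 0 * t ^ 2
  obtain ⟨hd, hr⟩ := relsDT'_relations k
  have hconj : t * u * t⁻¹ = u ^ 2 := relator_eq_one_iff_conj_eq_sq.mp hr
  have hu : u ^ (∑ i ∈ range k, 4 ^ i) = 1 :=
    pow_sum_four_pow_eq_one hconj (by rwa [mul_inv_cancel_right])
  obtain ⟨d', t', hd', hr', hu'⟩ := exists_perm_zmod_relsDT' hk
  set ψ := PresentedGroup.toGroup (relsDT'_lift_eq_one hd' hr')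
  have hψ : ψ u = Equiv.addRight 1 := by
    simp [ψ, u, t, PresentedGroup.toGroup.of, hu']
  have horder : orderOf u = ∑ i ∈ range k, 4 ^ i :=
    (orderOf_dvd_of_pow_eq_one hu).antisymm <| by
      simpa [hψ, orderOf_addRight_one] using orderOf_map_dvd ψ u
  rw [commutator_eq_zpowers_of_conj_eq_sq closure_of_one_of_zero_mul_sq_eq_top hconj
    (horder ▸ odd_sum_range_four_pow hk), Nat.card_zpowers, horder]
  exact ⟨inferInstance, rfl⟩
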